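/- The shuffle of two regular languages is regular. -/

import Mathlib

/-- `Shuffle u v w` means `w` is an interleaving of `u` and `v`, i.e. `w ∈ u || v`. -/
inductive Shuffle {α : Type*} : List α → List α → List α → Prop
  | nil : Shuffle [] [] []
  | left {u v w : List α} (a : α) : Shuffle u v w → Shuffle (a :: u) v (a :: w)
  | right {u v w : List α} (b : α) : Shuffle u v w → Shuffle u (b :: v) (b :: w)

/-- The shuffle of two languages: `L₁ || L₂ = ⋃_{u ∈ L₁, v ∈ L₂} u || v`. -/
def shuffleLang {α : Type} (L₁ L₂ : Language α) : Language α :=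
  {w | ∃ u ∈ L₁, ∃ v ∈ L₂, Shuffle u v w}

/-!
Run DFAs for `L₁` and `L₂` side by side and let every letter advance exactly one of them,
chosen nondeterministically. The resulting NFA on the product of the state spaces reaches the
state pair `(M₁.eval u, M₂.eval v)` on input `w` exactly when `w` is an interleaving of `u`
and `v`, so it accepts `shuffleLang L₁ L₂`; the subset construction makes it a DFA.
-/

namespace Shuffle

variable {α : Type*}

theorem cons_iff {u v w : List α} {a : α} :
    Shuffle u v (a :: w) ↔
      (∃ u', u = a :: u' ∧ Shuffle u' v w) ∨ (∃ v', v = a :: v' ∧ Shuffle u v' w) := by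
  constructor
  · rintro (_ | ⟨_, h⟩ | ⟨_, h⟩)
    · exact .inl ⟨_, rfl, h⟩
    · exact .inr ⟨_, rfl, h⟩
  · rintro (⟨u', rfl, h⟩ | ⟨v', rfl, h⟩)
    · exact h.left a
    · exact h.right a

end Shuffle

namespace DFA

variable {α : Type} {σ₁ σ₂ : Type*}

def shuffle (M₁ : DFA α σ₁) (M₂ : DFA α σ₂) : NFA α (σ₁ × σ₂) where
  step p a := {(M₁.step p.1 a, p.2), (p.1, M₂.step p.2 a)}
  start := {(M₁.start, M₂.start)}
  accept := M₁.accept ×ˢ M₂.accept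

variable (M₁ : DFA α σ₁) (M₂ : DFA α σ₂)

theorem shuffle_evalFrom_singleton_cons (s : σ₁) (t : σ₂) (a : α) (w : List α) :
    (M₁.shuffle M₂).evalFrom {(s, t)} (a :: w) =
      (M₁.shuffle M₂).evalFrom {(M₁.step s a, t)} w ∪
        (M₁.shuffle M₂).evalFrom {(s, M₂.step t a)} w := by
  rw [NFA.evalFrom_cons, NFA.stepSet_singleton, ← NFA.evalFrom_union]
  rfl

theorem mem_shuffle_evalFrom_singleton (w : List α) (s : σ₁) (t : σ₂) (q : σ₁ × σ₂) :
    q ∈ (M₁.shuffle M₂).evalFrom {(s, t)} w ↔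
      ∃ u v, Shuffle u v w ∧ (M₁.evalFrom s u, M₂.evalFrom t v) = q := by
  induction w generalizing s t with
  | nil =>
    simp only [NFA.evalFrom_nil, Set.mem_singleton_iff]
    constructor
    · rintro rfl
      exact ⟨[], [], .nil, rfl⟩
    · rintro ⟨u, v, ⟨⟩, rfl⟩
      rfl
  | cons a w ih =>
    simp only [shuffle_evalFrom_singleton_cons, Set.mem_union, ih, Shuffle.cons_iff]
    constructor
    · rintro (⟨u, v, h, rfl⟩ | ⟨u, v, h, rfl⟩)
      · exact ⟨a :: u, v, .inl ⟨u, rfl, h⟩, rfl⟩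
      · exact ⟨u, a :: v, .inr ⟨v, rfl, h⟩, rfl⟩
    · rintro ⟨_, _, ⟨u, rfl, h⟩ | ⟨v, rfl, h⟩, rfl⟩
      · exact .inl ⟨u, _, h, rfl⟩
      · exact .inr ⟨_, v, h, rfl⟩

theorem shuffle_accepts :
    (M₁.shuffle M₂).accepts = shuffleLang M₁.accepts M₂.accepts := by
  ext w
  change (∃ q ∈ M₁.accept ×ˢ M₂.accept, q ∈ (M₁.shuffle M₂).evalFrom {(M₁.start, M₂.start)} w) ↔ _
  simp only [mem_shuffle_evalFrom_singleton]
  constructor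
  · rintro ⟨_, ⟨hu, hv⟩, u, v, h, rfl⟩
    exact ⟨u, hu, v, hv, h⟩
  · rintro ⟨u, hu, v, hv, h⟩
    exact ⟨(M₁.eval u, M₂.eval v), ⟨hu, hv⟩, u, v, h, rfl⟩

end DFA

/-- The shuffle of two regular languages is regular. -/
theorem shuffleLang_isRegular {α : Type} (L₁ L₂ : Language α)
    (h₁ : L₁.IsRegular) (h₂ : L₂.IsRegular) : (shuffleLang L₁ L₂).IsRegular := by
  obtain ⟨σ₁, _, M₁, rfl⟩ := h₁
  obtain ⟨σ₂, _, M₂, rfl⟩ := h₂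
  classical
  exact ⟨_, inferInstance, (M₁.shuffle M₂).toDFA, by rw [NFA.toDFA_correct, DFA.shuffle_accepts]⟩
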